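/- Let A be an ordered semiring. The following are equivalent: (1) x ≤ 0 holds for every x ∈ A; (2) 1 ≤ 0 holds in A; (3) A has no prime ideals; (4) A has no maximal ideals. -/
import Mathlib


universe u v

section Defs

variable {A : Type u} [CommSemiring A] [Preorder A]

/-- The set `⟨S⟩ = {z | ∃ m, ∃ s₁,…,s_m ∈ S, ∃ y₁,…,y_m, z ≤ s₁y₁ + ⋯ + s_m y_m}`,
the smallest ideal of the ordered semiring `A` containing `S`. -/
def span (S : Set A) : Set A :=
  {z : A | ∃ (m : ℕ) (s y : Fin m → A), (∀ i, s i ∈ S) ∧ z ≤ ∑ i, s i * y i}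

/-- `I` is an ideal of the ordered semiring `A`: downward closed, contains `0`,
closed under addition, and absorbing under multiplication. -/
def IsIdeal (I : Set A) : Prop :=
  (∀ ⦃x y : A⦄, x ≤ y → y ∈ I → x ∈ I) ∧ (0 : A) ∈ I ∧
    (∀ ⦃x y : A⦄, x ∈ I → y ∈ I → x + y ∈ I) ∧
    ∀ x y : A, x ∈ I ∨ y ∈ I → x * y ∈ I

/-- The product `I · J` of two ideals: the ideal generated by `{x * y | x ∈ I, y ∈ J}`. -/
def iprod (I J : Set A) : Set A := span (Set.image2 (· * ·) I J)

/-- The radical `√I = {x | ∃ n ≥ 1, x ^ n ∈ I}` of an ideal `I`. -/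
def radical (I : Set A) : Set A := {x : A | ∃ n : ℕ, 1 ≤ n ∧ x ^ n ∈ I}

/-- `I` is a radical ideal of the ordered semiring `A`. -/
def IsRadicalIdeal (I : Set A) : Prop :=
  IsIdeal I ∧ ∀ (x : A) (n : ℕ), 1 ≤ n → x ^ n ∈ I → x ∈ I

/-- `I` is a prime ideal of the ordered semiring `A`. -/
def IsPrimeIdeal (I : Set A) : Prop :=
  IsIdeal I ∧ (1 : A) ∉ I ∧ ∀ x y : A, x * y ∈ I → x ∈ I ∨ y ∈ I

/-- `I` is a maximal ideal of the ordered semiring `A`. -/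
def IsMaximalIdeal (I : Set A) : Prop :=
  IsIdeal I ∧ I ≠ Set.univ ∧ ∀ J : Set A, IsIdeal J → I ⊆ J → J = I ∨ J = Set.univ

end Defs

section Aux

variable {A : Type u} [CommSemiring A] [Preorder A]
  [CovariantClass A A (· + ·) (· ≤ ·)] [CovariantClass A A (· * ·) (· ≤ ·)]

lemma my_mul_le_mul {a b c d : A} (h1 : a ≤ b) (h2 : c ≤ d) : a * c ≤ b * d :=
  calc a * c ≤ a * d := mul_le_mul_right h2 a
    _ = d * a := mul_comm _ _
    _ ≤ d * b := mul_le_mul_right h1 d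
    _ = b * d := mul_comm _ _

lemma subset_span (S : Set A) : S ⊆ span S := fun z hz =>
  ⟨1, fun _ => z, fun _ => 1, fun _ => hz, by simp⟩

lemma span_isIdeal (S : Set A) : IsIdeal (span S) := by
  refine ⟨?_, ?_, ?_, ?_⟩
  · rintro x y hxy ⟨m, s, t, hs, hy⟩
    exact ⟨m, s, t, hs, hxy.trans hy⟩
  · exact ⟨0, Fin.elim0, Fin.elim0, fun i => i.elim0, by simp⟩
  · rintro x y ⟨m, s, t, hs, hx⟩ ⟨n, s', t', hs', hy⟩
    refine ⟨m + n, Fin.append s s', Fin.append t t', ?_, ?_⟩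
    · intro i
      refine Fin.addCases (fun j => ?_) (fun j => ?_) i
      · simpa [Fin.append_left] using hs j
      · simpa [Fin.append_right] using hs' j
    · have e : ∑ i : Fin (m + n), Fin.append s s' i * Fin.append t t' i
          = (∑ i : Fin m, s i * t i) + ∑ i : Fin n, s' i * t' i := by
        rw [Fin.sum_univ_add]
        simp [Fin.append_left, Fin.append_right]
      rw [e]
      exact add_le_add hx hy
  · rintro x y (⟨m, s, t, hs, hx⟩ | ⟨m, s, t, hs, hy⟩)
    · refine ⟨m, s, fun i => t i * y, hs, ?_⟩
      calc x * y = y * x := mul_comm _ _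
        _ ≤ y * ∑ i, s i * t i := mul_le_mul_right hx y
        _ = ∑ i, s i * (t i * y) := by
            rw [Finset.mul_sum]; exact Finset.sum_congr rfl fun i _ => by ring
    · refine ⟨m, s, fun i => t i * x, hs, ?_⟩
      calc x * y ≤ x * ∑ i, s i * t i := mul_le_mul_right hy x
        _ = ∑ i, s i * (t i * x) := by
            rw [Finset.mul_sum]; exact Finset.sum_congr rfl fun i _ => by ring

lemma ideal_eq_univ_of_one_mem {I : Set A} (hI : IsIdeal I) (h1 : (1 : A) ∈ I) :
    I = Set.univ :=
  Set.eq_univ_of_forall fun x => by simpa using hI.2.2.2 x 1 (Or.inr h1)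

lemma one_le_add_of_span {M : Set A} (hM : IsIdeal M) (x : A)
    (h : (1 : A) ∈ span (M ∪ {x})) : ∃ m ∈ M, ∃ a, (1 : A) ≤ m + x * a := by
  classical
  obtain ⟨n, s, t, hs, h1⟩ := h
  have key : ∃ m ∈ M, ∃ a, (∑ i, s i * t i) ≤ m + x * a := by
    refine Finset.sum_induction (fun i => s i * t i) (fun z => ∃ m ∈ M, ∃ a, z ≤ m + x * a)
      ?_ ?_ ?_
    · rintro a b ⟨m1, hm1, a1, ha1⟩ ⟨m2, hm2, a2, ha2⟩
      refine ⟨m1 + m2, hM.2.2.1 hm1 hm2, a1 + a2, ?_⟩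
      calc a + b ≤ (m1 + x * a1) + (m2 + x * a2) := add_le_add ha1 ha2
        _ = (m1 + m2) + x * (a1 + a2) := by ring
    · exact ⟨0, hM.2.1, 0, by simp⟩
    · intro i _
      rcases hs i with hsi | hsi
      · exact ⟨s i * t i, hM.2.2.2 _ _ (Or.inl hsi), 0, by simp⟩
      · simp only [Set.mem_singleton_iff] at hsi
        exact ⟨0, hM.2.1, t i, by simp [hsi]⟩
  obtain ⟨m, hm, a, hma⟩ := key
  exact ⟨m, hm, a, h1.trans hma⟩

lemma maximal_prime {M : Set A} (hM : IsMaximalIdeal M) : IsPrimeIdeal M := by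
  obtain ⟨hI, hne, hmax⟩ := hM
  have h1 : (1 : A) ∉ M := fun h => hne (ideal_eq_univ_of_one_mem hI h)
  refine ⟨hI, h1, fun x y hxy => ?_⟩
  by_contra hc
  push_neg at hc
  obtain ⟨hx, hy⟩ := hc
  have hspan : ∀ z : A, z ∉ M → (1 : A) ∈ span (M ∪ {z}) := by
    intro z hz
    rcases hmax _ (span_isIdeal (M ∪ {z})) (fun w hw => subset_span _ (Or.inl hw)) with h | h
    · exact absurd (h ▸ subset_span _ (Or.inr rfl)) hz
    · rw [h]; trivial
  obtain ⟨m1, hm1, a, ha⟩ := one_le_add_of_span hI x (hspan x hx)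
  obtain ⟨m2, hm2, b, hb⟩ := one_le_add_of_span hI y (hspan y hy)
  have hle : (1 : A) ≤ (m1 + x * a) * (m2 + y * b) := by
    calc (1 : A) = 1 * 1 := (one_mul 1).symm
      _ ≤ (m1 + x * a) * (m2 + y * b) := my_mul_le_mul ha hb
  have hmem : (m1 + x * a) * (m2 + y * b) ∈ M := by
    have e : (m1 + x * a) * (m2 + y * b)
        = m1 * (m2 + y * b) + (x * a) * m2 + (x * y) * (a * b) := by ring
    rw [e]
    exact hI.2.2.1 (hI.2.2.1 (hI.2.2.2 _ _ (Or.inl hm1)) (hI.2.2.2 _ _ (Or.inr hm2)))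
      (hI.2.2.2 _ _ (Or.inl hxy))
  exact h1 (hI.1 hle hmem)

lemma exists_maximal (h : ¬ (1 : A) ≤ 0) : ∃ I : Set A, IsMaximalIdeal I := by
  set S : Set (Set A) := {I | IsIdeal I ∧ (1 : A) ∉ I} with hS
  have hI0 : {x : A | x ≤ 0} ∈ S := by
    refine ⟨⟨fun x y hxy hy => hxy.trans hy, le_refl 0, ?_, ?_⟩, h⟩
    · intro x y hx hy
      calc x + y ≤ 0 + 0 := add_le_add hx hy
        _ = 0 := add_zero 0
    · rintro x y (hx | hy)
      · calc x * y = y * x := mul_comm _ _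
          _ ≤ y * 0 := mul_le_mul_right hx y
          _ = 0 := mul_zero y
      · calc x * y ≤ x * 0 := mul_le_mul_right hy x
          _ = 0 := mul_zero x
  have hchain : ∀ c ⊆ S, IsChain (· ⊆ ·) c → c.Nonempty →
      ∃ ub ∈ S, ∀ s ∈ c, s ⊆ ub := by
    intro c hcS hc hne
    refine ⟨⋃₀ c, ⟨⟨?_, ?_, ?_, ?_⟩, ?_⟩, fun s hs => Set.subset_sUnion_of_mem hs⟩
    · rintro x y hxy ⟨I, hI, hyI⟩
      exact ⟨I, hI, (hcS hI).1.1 hxy hyI⟩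
    · obtain ⟨I, hI⟩ := hne
      exact ⟨I, hI, (hcS hI).1.2.1⟩
    · rintro x y ⟨I, hI, hxI⟩ ⟨J, hJ, hyJ⟩
      rcases hc.total hI hJ with hIJ | hJI
      · exact ⟨J, hJ, (hcS hJ).1.2.2.1 (hIJ hxI) hyJ⟩
      · exact ⟨I, hI, (hcS hI).1.2.2.1 hxI (hJI hyJ)⟩
    · rintro x y (⟨I, hI, hxI⟩ | ⟨I, hI, hyI⟩)
      · exact ⟨I, hI, (hcS hI).1.2.2.2 x y (Or.inl hxI)⟩
      · exact ⟨I, hI, (hcS hI).1.2.2.2 x y (Or.inr hyI)⟩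
    · rintro ⟨I, hI, h1I⟩
      exact (hcS hI).2 h1I
  obtain ⟨M, -, hMS, hmax⟩ := zorn_subset_nonempty S hchain _ hI0
  refine ⟨M, hMS.1, ?_, fun J hJ hMJ => ?_⟩
  · intro hu
    exact hMS.2 (hu ▸ (Set.mem_univ (1 : A)))
  · by_cases h1J : (1 : A) ∈ J
    · exact Or.inr (ideal_eq_univ_of_one_mem hJ h1J)
    · exact Or.inl (Set.Subset.antisymm (hmax ⟨hJ, h1J⟩ hMJ) hMJ)

end Aux

/-- the following are equivalent: (1) `x ≤ 0` for every `x ∈ A`;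
(2) `1 ≤ 0` in `A`; (3) `A` has no prime ideals; (4) `A` has no maximal ideals. -/
theorem stmt15 {A : Type u} [CommSemiring A] [Preorder A]
    [CovariantClass A A (· + ·) (· ≤ ·)] [CovariantClass A A (· * ·) (· ≤ ·)] :
    List.TFAE
      [∀ x : A, x ≤ 0,
        (1 : A) ≤ 0,
        ¬∃ I : Set A, IsPrimeIdeal I,
        ¬∃ I : Set A, IsMaximalIdeal I] := by
  tfae_have 1 → 2 := fun h => h 1
  tfae_have 2 → 1 := fun h x => by
    calc x = x * 1 := (mul_one x).symm
      _ ≤ x * 0 := mul_le_mul_right h x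
      _ = 0 := mul_zero x
  tfae_have 2 → 3 := fun h => by rintro ⟨I, hI⟩; exact hI.2.1 (hI.1.1 h hI.1.2.1)
  tfae_have 3 → 4 := fun h => by rintro ⟨I, hI⟩; exact h ⟨I, maximal_prime hI⟩
  tfae_have 4 → 2 := fun h => by by_contra hc; exact h (exists_maximal hc)
  tfae_finish
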